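/- For every finite tree T with maximum degree Δ, the total difference chromatic number satisfies Δ + 1 ≤ χ_td(T) ≤ 2Δ + 1. -/

import Mathlib

open SimpleGraph

/-- A `k`-total difference labeling of `G`: a proper vertex labeling `c` with labels in
`{1,…,k}` such that the induced edge label `|c u - c v|` of each edge differs from the
labels of its two incident vertices, and distinct edges sharing a vertex receive
distinct induced labels. -/
def IsTotalDiffLabeling {V : Type*} (G : SimpleGraph V) (k : ℕ) (c : V → ℕ) : Prop :=
  (∀ v, 1 ≤ c v ∧ c v ≤ k) ∧
  (∀ u v, G.Adj u v → c u ≠ c v) ∧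
  (∀ u v, G.Adj u v → Nat.dist (c u) (c v) ≠ c u ∧ Nat.dist (c u) (c v) ≠ c v) ∧
  (∀ u v w, G.Adj u v → G.Adj v w → u ≠ w →
    Nat.dist (c u) (c v) ≠ Nat.dist (c v) (c w))

/-- The total difference chromatic number of `G`: the least `k` for which `G` admits a
`k`-total difference labeling. -/
noncomputable def tdChromatic {V : Type*} (G : SimpleGraph V) : ℕ :=
  sInf {k | ∃ c : V → ℕ, IsTotalDiffLabeling G k c}


/-!
A new leaf `x` hanging from a vertex `p` labeled `a` may receive any label `X` in `[1, 2Δ + 1]`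
that avoids `a`, makes the new edge label `|X - a|` differ from `X`, from `a` and from the at most
`Δ - 1` labels of the other edges at `p`. Such an `X` always exists (take `X = a + d` with `d`
small when `a ≤ Δ + 1`, and `X = a - d` otherwise), so a tree is labeled greedily by removing a
leaf, labeling the rest, and putting the leaf back. Conversely, the `deg v` edges at `v` carry
distinct labels in `[1, k - 1]`.
-/

open Finset

section PendantLabel

/-- `X` is a valid label for a new leaf attached to a vertex labeled `a` whose other edges carry
labels in `S`. -/
def IsPendantLabel (k a : ℕ) (S : Finset ℕ) (X : ℕ) : Prop :=
  1 ≤ X ∧ X ≤ k ∧ X ≠ a ∧ Nat.dist X a ≠ X ∧ Nat.dist X a ≠ a ∧ Nat.dist X a ∉ S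

variable {k a d : ℕ} {S : Finset ℕ}

lemma isPendantLabel_add (ha : 1 ≤ a) (hd : 1 ≤ d) (hk : a + d ≤ k) (hda : d ≠ a)
    (hdS : d ∉ S) : IsPendantLabel k a S (a + d) := by
  have hdist : Nat.dist (a + d) a = d := by unfold Nat.dist; omega
  simp only [IsPendantLabel, hdist]
  exact ⟨by omega, hk, by omega, by omega, hda, hdS⟩

lemma isPendantLabel_sub (hd : 1 ≤ d) (hda : d < a) (hk : a ≤ k) (h2d : 2 * d ≠ a)
    (hdS : d ∉ S) : IsPendantLabel k a S (a - d) := by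
  have hdist : Nat.dist (a - d) a = d := by unfold Nat.dist; omega
  simp only [IsPendantLabel, hdist]
  exact ⟨by omega, by omega, by omega, by omega, by omega, hdS⟩

lemma exists_isPendantLabel {Δ : ℕ} (ha : 1 ≤ a) (hak : a ≤ 2 * Δ + 1) (hS : #S < Δ) :
    ∃ X, IsPendantLabel (2 * Δ + 1) a S X := by
  rcases lt_trichotomy a (Δ + 1) with ha' | rfl | ha'
  · obtain ⟨d, hd, hdS⟩ := exists_mem_notMem_of_card_lt_card (s := insert a S)
      (t := Icc 1 (Δ + 1)) (by have := card_insert_le a S; rw [Nat.card_Icc]; omega)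
    rw [mem_Icc] at hd
    rw [mem_insert, not_or] at hdS
    exact ⟨a + d, isPendantLabel_add ha hd.1 (by omega) hdS.1 hdS.2⟩
  · -- `d ≤ Δ < a` makes `d ≠ a` automatic, so only the `Δ - 1` labels in `S` are excluded.
    obtain ⟨d, hd, hdS⟩ := exists_mem_notMem_of_card_lt_card (s := S) (t := Icc 1 Δ)
      (by rw [Nat.card_Icc]; omega)
    rw [mem_Icc] at hd
    exact ⟨Δ + 1 + d, isPendantLabel_add ha hd.1 (by omega) (by omega) hdS⟩
  · obtain ⟨d, hd, hdS⟩ := exists_mem_notMem_of_card_lt_card (s := insert (a / 2) S)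
      (t := Icc 1 (Δ + 1)) (by have := card_insert_le (a / 2) S; rw [Nat.card_Icc]; omega)
    rw [mem_Icc] at hd
    rw [mem_insert, not_or] at hdS
    exact ⟨a - d, isPendantLabel_sub hd.1 (by omega) hak (by omega) hdS.2⟩

end PendantLabel

namespace IsTotalDiffLabeling

variable {V : Type*} {G : SimpleGraph V} {k : ℕ} {c : V → ℕ}

lemma degree_lt (hc : IsTotalDiffLabeling G k c) (v : V) [Fintype (G.neighborSet v)] :
    G.degree v < k := by
  obtain ⟨hrange, hproper, -, hpath⟩ := hc
  have hmaps : ∀ u ∈ G.neighborFinset v, Nat.dist (c u) (c v) ∈ Ico 1 k := by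
    intro u hu
    have := hproper v u ((mem_neighborFinset _ _ _).1 hu)
    have := hrange u
    have := hrange v
    rw [mem_Ico]
    unfold Nat.dist
    omega
  have hinj : Set.InjOn (fun u => Nat.dist (c u) (c v)) (G.neighborFinset v) := by
    intro u hu w hw huw
    by_contra hne
    rw [mem_coe, mem_neighborFinset] at hu hw
    exact hpath u v w hu.symm hw hne (huw.trans (Nat.dist_comm _ _))
  have hcard := card_le_card_of_injOn _ hmaps hinj
  rw [Nat.card_Ico, card_neighborFinset_eq_degree] at hcard
  have := hrange v
  omega

lemma update_of_leaf [DecidableEq V] {x p : V} {X : ℕ} {S : Finset ℕ}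
    (hc : IsTotalDiffLabeling (G.induce {x}ᶜ) k fun v => c v)
    (hleaf : ∀ a, G.Adj x a ↔ a = p)
    (hS : ∀ u, G.Adj p u → u ≠ x → Nat.dist (c u) (c p) ∈ S)
    (hX : IsPendantLabel k (c p) S X) :
    IsTotalDiffLabeling G k (Function.update c x X) := by
  obtain ⟨hrange, hproper, hvert, hpath⟩ := hc
  obtain ⟨hX1, hXk, hXa, hdX, hda, hdS⟩ := hX
  have hpx : p ≠ x := (G.ne_of_adj ((hleaf p).2 rfl)).symm
  have hx : Function.update c x X x = X := Function.update_self _ _ _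
  have hne : ∀ v, v ≠ x → Function.update c x X v = c v := fun v hv =>
    Function.update_of_ne hv _ _
  have hedge : ∀ u v, G.Adj u v → (u = x ∧ v = p) ∨ (u = p ∧ v = x) ∨ (u ≠ x ∧ v ≠ x) := by
    intro u v huv
    by_cases hu : u = x
    · exact Or.inl ⟨hu, (hleaf v).1 (hu ▸ huv)⟩
    by_cases hv : v = x
    · exact Or.inr (Or.inl ⟨(hleaf u).1 (hv ▸ huv.symm), hv⟩)
    exact Or.inr (Or.inr ⟨hu, hv⟩)
  refine ⟨fun v => ?_, fun u v huv => ?_, fun u v huv => ?_, fun u v w huv hvw huw => ?_⟩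
  · by_cases hv : v = x
    · rw [hv, hx]
      exact ⟨hX1, hXk⟩
    · rw [hne v hv]
      exact hrange ⟨v, hv⟩
  · rcases hedge u v huv with ⟨rfl, rfl⟩ | ⟨rfl, rfl⟩ | ⟨hu, hv⟩
    · rw [hx, hne _ hpx]
      exact hXa
    · rw [hx, hne _ hpx]
      exact hXa.symm
    · rw [hne u hu, hne v hv]
      exact hproper ⟨u, hu⟩ ⟨v, hv⟩ huv
  · rcases hedge u v huv with ⟨rfl, rfl⟩ | ⟨rfl, rfl⟩ | ⟨hu, hv⟩
    · rw [hx, hne _ hpx]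
      exact ⟨hdX, hda⟩
    · rw [hx, hne _ hpx, Nat.dist_comm]
      exact ⟨hda, hdX⟩
    · rw [hne u hu, hne v hv]
      exact hvert ⟨u, hu⟩ ⟨v, hv⟩ huv
  · rcases hedge u v huv with ⟨rfl, rfl⟩ | ⟨rfl, rfl⟩ | ⟨hu, hv⟩
    · have hw : w ≠ u := Ne.symm huw
      rw [hx, hne _ hpx, hne w hw]
      intro h
      apply hdS
      rw [h, Nat.dist_comm]
      exact hS w hvw hw
    · exact absurd ((hleaf w).1 hvw).symm huw
    · rcases hedge v w hvw with ⟨rfl, -⟩ | ⟨rfl, rfl⟩ | ⟨-, hw⟩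
      · exact absurd rfl hv
      · rw [hne u hu, hne _ hpx, hx]
        intro h
        apply hdS
        rw [Nat.dist_comm, ← h]
        exact hS u huv.symm hu
      · rw [hne u hu, hne v hv, hne w hw]
        exact hpath ⟨u, hu⟩ ⟨v, hv⟩ ⟨w, hw⟩ huv hvw fun h => huw (congrArg Subtype.val h)

end IsTotalDiffLabeling

theorem SimpleGraph.IsTree.exists_isTotalDiffLabeling {V : Type*} [Fintype V]
    {G : SimpleGraph V} [DecidableRel G.Adj] (hG : G.IsTree) {Δ : ℕ} (hΔ : G.maxDegree ≤ Δ) :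
    ∃ c, IsTotalDiffLabeling G (2 * Δ + 1) c := by
  induction hn : Fintype.card V using Nat.strong_induction_on generalizing V with
  | _ n ih =>
  classical
  rcases subsingleton_or_nontrivial V with hV | hV
  · refine ⟨fun _ => 1, fun _ => ⟨le_rfl, Nat.le_add_left 1 _⟩, ?_, ?_, ?_⟩ <;>
      intro u v <;> simp [Subsingleton.elim u v]
  obtain ⟨x, hx⟩ := hG.exists_vert_degree_one_of_nontrivial
  obtain ⟨p, hxp, hp⟩ := degree_eq_one_iff_existsUnique_adj.1 hx
  have hleaf : ∀ a, G.Adj x a ↔ a = p := fun a => ⟨hp a, by rintro rfl; exact hxp⟩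
  have hH : (G.induce {x}ᶜ).IsTree :=
    ⟨hG.connected.induce_compl_singleton_of_degree_eq_one hx, hG.isAcyclic.induce _⟩
  have hcard : Fintype.card ({x}ᶜ : Set V) < n := by
    rw [← hn, Fintype.card_compl_set, Set.card_singleton]
    exact Nat.sub_lt Fintype.card_pos one_pos
  obtain ⟨c', hc'⟩ := ih _ hcard hH
    ((Copy.maxDegree_mono (Embedding.induce _).toCopy).trans hΔ) rfl
  let c : V → ℕ := fun v => if h : v = x then 0 else c' ⟨v, h⟩
  have hcc' : (fun v : ({x}ᶜ : Set V) => c v) = c' := funext fun v => dif_neg v.2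
  have hpx : p ≠ x := (G.ne_of_adj hxp).symm
  let S := ((G.neighborFinset p).erase x).image fun u => Nat.dist (c u) (c p)
  have hS : #S < Δ :=
    calc #S ≤ #((G.neighborFinset p).erase x) := card_image_le
      _ < G.degree p := card_erase_lt_of_mem ((mem_neighborFinset _ _ _).2 hxp.symm)
      _ ≤ Δ := (G.degree_le_maxDegree p).trans hΔ
  have hcp : 1 ≤ c p ∧ c p ≤ 2 * Δ + 1 := by
    simpa [c, hpx] using hc'.1 ⟨p, hpx⟩
  obtain ⟨X, hX⟩ := exists_isPendantLabel hcp.1 hcp.2 hS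
  refine ⟨_, (hcc' ▸ hc').update_of_leaf hleaf (fun u hpu hux => ?_) hX⟩
  exact mem_image_of_mem _ (mem_erase.2 ⟨hux, (mem_neighborFinset _ _ _).2 hpu⟩)

/-- For every finite tree `T` with maximum degree `Δ`, `Δ + 1 ≤ χ_td(T) ≤ 2Δ + 1`. -/
theorem tdChromatic_tree {V : Type*} [Fintype V] (G : SimpleGraph V)
    [DecidableRel G.Adj] (htree : G.IsTree) :
    G.maxDegree + 1 ≤ tdChromatic G ∧ tdChromatic G ≤ 2 * G.maxDegree + 1 := by
  have hmem : 2 * G.maxDegree + 1 ∈ {k | ∃ c : V → ℕ, IsTotalDiffLabeling G k c} :=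
    htree.exists_isTotalDiffLabeling le_rfl
  refine ⟨le_csInf ⟨_, hmem⟩ ?_, Nat.sInf_le hmem⟩
  rintro k ⟨c, hc⟩
  have := htree.connected.nonempty
  obtain ⟨v, hv⟩ := G.exists_maximal_degree_vertex
  exact hv ▸ hc.degree_lt v
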